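/- arXiv:1707.01570 — 6 statements merged into one kernel-verified Lean document; each statement's English description precedes it below -/
import Mathlib

section
/- Let ν > 0, let f = h + conj(g) be a harmonic mapping on 𝔻, and let α ∈ 𝔻 with φ_α(z) = (z + α)/(1 + conj(α)·z). Then for every z ∈ 𝔻, (1−|z|²)^ν · √(|J_{f∘φ_α}(z)|) ≤ ((1+|α|)/(1−|α|))^{|ν−1|} · β*_ν(f), where f ∘ φ_α = (h ∘ φ_α) + conj(g ∘ φ_α); in particular, if β*_ν(f) < ∞ then β*_ν(f ∘ φ_α) < ∞, i.e. the class of harmonic ν-Bloch-type mappings is linear invariant. -/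
open Complex Metric ComplexConjugate

/-!
The automorphism `φ_α` satisfies `1 - |φ_α z|² = (1 - |z|²) |φ_α' z|`, and by the chain rule
`√|J_{f∘φ_α}(z)| = |φ_α' z| √|J_f(φ_α z)|`. Hence
`(1 - |z|²)^ν √|J_{f∘φ_α}(z)| = |φ_α' z|^{1-ν} (1 - |φ_α z|²)^ν √|J_f(φ_α z)|`,
and `|φ_α' z| = (1 - |α|²)/|1 + ᾱz|²` lies between `(1-|α|)/(1+|α|)` and its inverse.
-/

/-- The disk automorphism `φ_α`. -/
noncomputable def diskAut (α z : ℂ) : ℂ := (z + α) / (1 + conj α * z)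

/-- `√|J_f|` for the harmonic map `f = h + conj g`. -/
noncomputable def sqrtAbsJacobian (h g : ℂ → ℂ) (z : ℂ) : ℝ :=
  Real.sqrt |‖deriv h z‖ ^ 2 - ‖deriv g z‖ ^ 2|

lemma Real.rpow_le_rpow_abs_of_inv_le_of_le {x r : ℝ} (hx : 0 < x) (hrx : r⁻¹ ≤ x)
    (hxr : x ≤ r) (t : ℝ) : x ^ t ≤ r ^ |t| := by
  rcases le_or_gt 0 t with ht | ht
  · rw [abs_of_nonneg ht]
    exact Real.rpow_le_rpow hx.le hxr ht
  · have hr : 0 < r := hx.trans_le hxr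
    rw [abs_of_neg ht, ← inv_inv x, Real.inv_rpow (inv_pos.2 hx).le, ← Real.rpow_neg
      (inv_pos.2 hx).le]
    exact Real.rpow_le_rpow (by positivity) ((inv_le_comm₀ hx hr).2 hrx) (by linarith)

lemma sqrtAbsJacobian_comp {h g φ : ℂ → ℂ} {φ' z : ℂ} (hφ : HasDerivAt φ φ' z)
    (hh : DifferentiableAt ℂ h (φ z)) (hg : DifferentiableAt ℂ g (φ z)) :
    sqrtAbsJacobian (h ∘ φ) (g ∘ φ) z = ‖φ'‖ * sqrtAbsJacobian h g (φ z) := by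
  have jac : ‖deriv (h ∘ φ) z‖ ^ 2 - ‖deriv (g ∘ φ) z‖ ^ 2
      = ‖φ'‖ ^ 2 * (‖deriv h (φ z)‖ ^ 2 - ‖deriv g (φ z)‖ ^ 2) := by
    rw [(hh.hasDerivAt.comp z hφ).deriv, (hg.hasDerivAt.comp z hφ).deriv, norm_mul, norm_mul]
    ring
  rw [sqrtAbsJacobian, sqrtAbsJacobian, jac, abs_mul, abs_of_nonneg (sq_nonneg _),
    Real.sqrt_mul (sq_nonneg _), Real.sqrt_sq (norm_nonneg _)]

namespace diskAut

variable {α z : ℂ}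

lemma norm_denom_le (hz : ‖z‖ ≤ 1) : ‖1 + conj α * z‖ ≤ 1 + ‖α‖ :=
  calc ‖1 + conj α * z‖ ≤ 1 + ‖α‖ * ‖z‖ := by
        simpa only [norm_one, norm_mul, norm_conj] using norm_add_le (1 : ℂ) (conj α * z)
    _ ≤ 1 + ‖α‖ := by gcongr; exact mul_le_of_le_one_right (norm_nonneg α) hz

lemma one_sub_norm_le_norm_denom (hz : ‖z‖ ≤ 1) : 1 - ‖α‖ ≤ ‖1 + conj α * z‖ :=
  calc 1 - ‖α‖ ≤ 1 - ‖α‖ * ‖z‖ := by gcongr; exact mul_le_of_le_one_right (norm_nonneg α) hz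
    _ ≤ ‖1 + conj α * z‖ := by
        simpa only [norm_one, norm_neg, norm_mul, norm_conj, sub_neg_eq_add] using
          norm_sub_norm_le (1 : ℂ) (-(conj α * z))

noncomputable def normDeriv (α z : ℂ) : ℝ := (1 - ‖α‖ ^ 2) / ‖1 + conj α * z‖ ^ 2

lemma hasDerivAt (hD : 1 + conj α * z ≠ 0) :
    HasDerivAt (diskAut α) ((1 - conj α * α) / (1 + conj α * z) ^ 2) z := by
  have hnum : HasDerivAt (fun w : ℂ => w + α) 1 z := (hasDerivAt_id z).add_const α
  have hden : HasDerivAt (fun w : ℂ => 1 + conj α * w) (conj α) z := by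
    simpa using ((hasDerivAt_id z).const_mul (conj α)).const_add 1
  exact (hnum.div hden hD).congr_deriv (by ring)

lemma norm_deriv (hα : ‖α‖ ≤ 1) :
    ‖(1 - conj α * α) / (1 + conj α * z) ^ 2‖ = normDeriv α z := by
  have hnum : 1 - conj α * α = ((1 - ‖α‖ ^ 2 : ℝ) : ℂ) := by
    rw [mul_comm, mul_conj, normSq_eq_norm_sq]
    push_cast
    rfl
  rw [norm_div, norm_pow, hnum, norm_real, Real.norm_of_nonneg (by nlinarith [norm_nonneg α]),
    normDeriv]

lemma one_sub_sq_norm (hD : 1 + conj α * z ≠ 0) :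
    1 - ‖diskAut α z‖ ^ 2 = (1 - ‖z‖ ^ 2) * normDeriv α z := by
  have key : normSq (1 + conj α * z) - normSq (z + α) = (1 - normSq z) * (1 - normSq α) := by
    simp only [normSq_apply, add_re, add_im, mul_re, mul_im, conj_re, conj_im, one_re, one_im]
    ring
  have hD' : normSq (1 + conj α * z) ≠ 0 := normSq_eq_zero.not.2 hD
  rw [diskAut, normDeriv, norm_div, div_pow, Complex.sq_norm, Complex.sq_norm, Complex.sq_norm,
    Complex.sq_norm]
  rw [mul_div_assoc', ← key, sub_div, div_self hD']

variable (hα : ‖α‖ < 1) (hz : ‖z‖ < 1)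
include hα hz

lemma denom_ne_zero : 1 + conj α * z ≠ 0 :=
  norm_pos_iff.1 ((sub_pos.2 hα).trans_le (one_sub_norm_le_norm_denom hz.le))

lemma normDeriv_pos : 0 < normDeriv α z := by
  have hD := denom_ne_zero hα hz
  have hα2 : ‖α‖ ^ 2 < 1 := by nlinarith [norm_nonneg α]
  unfold normDeriv
  positivity

lemma normDeriv_le : normDeriv α z ≤ (1 + ‖α‖) / (1 - ‖α‖) := by
  have hlow := one_sub_norm_le_norm_denom (α := α) hz.le
  rw [normDeriv, div_le_div_iff₀ (by nlinarith [denom_ne_zero hα hz]) (by linarith)]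
  nlinarith [mul_self_le_mul_self (by linarith : (0 : ℝ) ≤ 1 - ‖α‖) hlow, norm_nonneg α]

lemma inv_le_normDeriv : ((1 + ‖α‖) / (1 - ‖α‖))⁻¹ ≤ normDeriv α z := by
  have hup := norm_denom_le (α := α) hz.le
  rw [normDeriv, inv_div, div_le_div_iff₀ (by linarith [norm_nonneg α])
    (by positivity [denom_ne_zero hα hz])]
  nlinarith [mul_self_le_mul_self (norm_nonneg _) hup, norm_nonneg α]

lemma one_sub_sq_norm_pos : 0 < 1 - ‖diskAut α z‖ ^ 2 := by
  rw [one_sub_sq_norm (denom_ne_zero hα hz)]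
  exact mul_pos (by nlinarith [norm_nonneg z]) (normDeriv_pos hα hz)

lemma mem_ball : diskAut α z ∈ ball (0 : ℂ) 1 := by
  rw [mem_ball_zero_iff]
  nlinarith [one_sub_sq_norm_pos hα hz, norm_nonneg (diskAut α z)]

end diskAut

lemma weighted_sqrtAbsJacobian_comp_diskAut {h g : ℂ → ℂ} {α z : ℂ} (ν : ℝ) (hα : ‖α‖ < 1)
    (hz : ‖z‖ < 1) (hh : DifferentiableAt ℂ h (diskAut α z))
    (hg : DifferentiableAt ℂ g (diskAut α z)) :
    (1 - ‖z‖ ^ 2) ^ ν * sqrtAbsJacobian (h ∘ diskAut α) (g ∘ diskAut α) z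
      = diskAut.normDeriv α z ^ (1 - ν) *
          ((1 - ‖diskAut α z‖ ^ 2) ^ ν * sqrtAbsJacobian h g (diskAut α z)) := by
  have hD := diskAut.denom_ne_zero hα hz
  have hp := diskAut.normDeriv_pos hα hz
  have hz' : 0 ≤ 1 - ‖z‖ ^ 2 := by nlinarith [norm_nonneg z]
  rw [sqrtAbsJacobian_comp (diskAut.hasDerivAt hD) hh hg, diskAut.norm_deriv hα.le,
    diskAut.one_sub_sq_norm hD, Real.mul_rpow hz' hp.le, Real.rpow_sub hp, Real.rpow_one]
  field_simp

theorem linear_invariance_harmonic_nu_Bloch_type_general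
    (ν : ℝ) (h g : ℂ → ℂ)
    (hh : DifferentiableOn ℂ h (ball 0 1))
    (hg : DifferentiableOn ℂ g (ball 0 1))
    (α : ℂ) (hα : α ∈ ball (0 : ℂ) 1) (M : ℝ)
    (hM : ∀ z ∈ ball (0 : ℂ) 1,
      (1 - ‖z‖ ^ 2) ^ ν *
        Real.sqrt |‖deriv h z‖ ^ 2 - ‖deriv g z‖ ^ 2| ≤ M) :
    ∀ z ∈ ball (0 : ℂ) 1,
      (1 - ‖z‖ ^ 2) ^ ν *
        Real.sqrt |‖deriv (fun w => h ((w + α) / (1 + (starRingEnd ℂ) α * w))) z‖ ^ 2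
          - ‖deriv (fun w => g ((w + α) / (1 + (starRingEnd ℂ) α * w))) z‖ ^ 2|
      ≤ ((1 + ‖α‖) / (1 - ‖α‖)) ^ |ν - 1| * M := by
  intro z hz
  rw [mem_ball_zero_iff] at hα hz
  have hω := diskAut.mem_ball hα hz
  have hp := diskAut.normDeriv_pos hα hz
  have hp_le := diskAut.normDeriv_le hα hz
  change (1 - ‖z‖ ^ 2) ^ ν * sqrtAbsJacobian (h ∘ diskAut α) (g ∘ diskAut α) z ≤ _
  rw [weighted_sqrtAbsJacobian_comp_diskAut ν hα hz (hh.differentiableAt (isOpen_ball.mem_nhds hω))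
    (hg.differentiableAt (isOpen_ball.mem_nhds hω)), abs_sub_comm]
  refine mul_le_mul ?_ (hM _ hω) ?_ (Real.rpow_nonneg (hp.trans_le hp_le).le _)
  · exact Real.rpow_le_rpow_abs_of_inv_le_of_le hp (diskAut.inv_le_normDeriv hα hz) hp_le _
  · exact mul_nonneg (Real.rpow_nonneg (diskAut.one_sub_sq_norm_pos hα hz).le _)
      (Real.sqrt_nonneg _)

/-- Linear invariance of harmonic ν-Bloch-type mappings:
for a harmonic mapping `f = h + conj g` on the unit disk, `α ∈ 𝔻`, and
`φ_α(z) = (z + α)/(1 + conj α · z)`, if `β*_ν(f) ≤ M` then for every `z ∈ 𝔻`,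
`(1−|z|²)^ν √|J_{f∘φ_α}(z)| ≤ ((1+|α|)/(1−|α|))^{|ν−1|} · M`. -/
theorem linear_invariance_harmonic_nu_Bloch_type
    (ν : ℝ) (hν : 0 < ν) (h g : ℂ → ℂ)
    (hh : DifferentiableOn ℂ h (ball 0 1))
    (hg : DifferentiableOn ℂ g (ball 0 1))
    (hg0 : g 0 = 0)
    (α : ℂ) (hα : α ∈ ball (0 : ℂ) 1) (M : ℝ)
    (hM : ∀ z ∈ ball (0 : ℂ) 1,
      (1 - ‖z‖ ^ 2) ^ ν *
        Real.sqrt |‖deriv h z‖ ^ 2 - ‖deriv g z‖ ^ 2| ≤ M) :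
    ∀ z ∈ ball (0 : ℂ) 1,
      (1 - ‖z‖ ^ 2) ^ ν *
        Real.sqrt |‖deriv (fun w => h ((w + α) / (1 + (starRingEnd ℂ) α * w))) z‖ ^ 2
          - ‖deriv (fun w => g ((w + α) / (1 + (starRingEnd ℂ) α * w))) z‖ ^ 2|
      ≤ ((1 + ‖α‖) / (1 - ‖α‖)) ^ |ν - 1| * M :=
  linear_invariance_harmonic_nu_Bloch_type_general ν h g hh hg α hα M hM
end

section
/- For every ν > 0: (i) every harmonic mapping f = h + conj(g) on 𝔻 satisfies β*_ν(f) ≤ β_ν(f), so every harmonic ν-Bloch mapping is a harmonic ν-Bloch-type mapping; and (ii) there exists a sense-preserving harmonic mapping f = h + conj(g) on 𝔻 with β*_ν(f) < ∞ and β_ν(f) = ∞. Hence the inclusion of the harmonic ν-Bloch space in the harmonic ν-Bloch-type class is strict. -/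
/-!
Part (i) is the pointwise inequality `√|x² - y²| ≤ x + y` for `x, y ≥ 0`.

For part (ii) take `h(z) = (1 - z)^(1 - a)` and `g` with `g' = z h'`, where `ν < a ≤ ν + 1/2`.
Then `|J_f| = |h'|² (1 - |z|²)` with `|h'(z)| ≍ |1 - z|^(-a)`, and `|1 - z| ≥ (1 - |z|²)/2` gives
`(1 - |z|²)^ν √|J_f| ≲ (1 - |z|²)^(ν + 1/2 - a) ≤ 1`, while along the radius to `1` the weight
`(1 - r²)^ν |h'(r)| ≳ (1 - r)^(ν - a)` is unbounded.
-/

open Complex Metric Filter Topology Set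

/-- `f = h + conj g` lies in the harmonic `ν`-Bloch space `𝓑_H(ν)`, i.e. `β_ν(f) < ∞`. -/
def IsHarmonicBloch (ν : ℝ) (h g : ℂ → ℂ) : Prop :=
  ∃ M : ℝ, ∀ z ∈ ball (0 : ℂ) 1, (1 - ‖z‖ ^ 2) ^ ν * (‖deriv h z‖ + ‖deriv g z‖) ≤ M

/-- `f = h + conj g` lies in the harmonic `ν`-Bloch-type class `𝓑*_H(ν)`, i.e. `β*_ν(f) < ∞`. -/
def IsHarmonicBlochType (ν : ℝ) (h g : ℂ → ℂ) : Prop :=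
  ∃ M : ℝ, ∀ z ∈ ball (0 : ℂ) 1,
    (1 - ‖z‖ ^ 2) ^ ν * Real.sqrt |‖deriv h z‖ ^ 2 - ‖deriv g z‖ ^ 2| ≤ M

lemma one_sub_norm_sq_pos {z : ℂ} (hz : z ∈ ball (0 : ℂ) 1) : 0 < 1 - ‖z‖ ^ 2 := by
  rw [mem_ball_zero_iff] at hz
  nlinarith [norm_nonneg z]

lemma one_sub_norm_sq_div_two_le_norm_one_sub {z : ℂ} (hz : z ∈ ball (0 : ℂ) 1) :
    (1 - ‖z‖ ^ 2) / 2 ≤ ‖1 - z‖ := by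
  rw [mem_ball_zero_iff] at hz
  have := norm_sub_norm_le (1 : ℂ) z
  rw [norm_one] at this
  nlinarith [norm_nonneg z]

lemma one_sub_mem_slitPlane {z : ℂ} (hz : z ∈ ball (0 : ℂ) 1) : 1 - z ∈ slitPlane := by
  rw [mem_ball_zero_iff] at hz
  left
  simpa using (re_le_norm z).trans_lt hz

lemma ofReal_one_sub_mem_ball {ε : ℝ} (hε : ε ∈ Ioo 0 1) : ((1 - ε : ℝ) : ℂ) ∈ ball (0 : ℂ) 1 := by
  rw [mem_ball_zero_iff, norm_real, Real.norm_of_nonneg (by linarith [hε.2])]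
  linarith [hε.1]

lemma Real.sqrt_abs_sq_sub_sq_le_add {x y : ℝ} (hx : 0 ≤ x) (hy : 0 ≤ y) :
    √|x ^ 2 - y ^ 2| ≤ x + y := by
  rw [Real.sqrt_le_left (by positivity)]
  exact abs_le.mpr ⟨by nlinarith, by nlinarith⟩

lemma Real.sqrt_abs_sq_sub_mul_sq {x A : ℝ} (hx : 0 ≤ x) (hA : A ^ 2 ≤ 1) :
    √|x ^ 2 - (A * x) ^ 2| = x * √(1 - A ^ 2) := by
  rw [show x ^ 2 - (A * x) ^ 2 = x ^ 2 * (1 - A ^ 2) by ring,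
    abs_of_nonneg (by nlinarith), Real.sqrt_mul (sq_nonneg x), Real.sqrt_sq hx]

lemma blochType_le_bloch (ν : ℝ) (h g : ℂ → ℂ) {z : ℂ} (hz : z ∈ ball (0 : ℂ) 1) :
    (1 - ‖z‖ ^ 2) ^ ν * √|‖deriv h z‖ ^ 2 - ‖deriv g z‖ ^ 2|
      ≤ (1 - ‖z‖ ^ 2) ^ ν * (‖deriv h z‖ + ‖deriv g z‖) :=
  mul_le_mul_of_nonneg_left (Real.sqrt_abs_sq_sub_sq_le_add (norm_nonneg _) (norm_nonneg _))
    (Real.rpow_nonneg (one_sub_norm_sq_pos hz).le ν)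

lemma IsHarmonicBloch.isHarmonicBlochType {ν : ℝ} {h g : ℂ → ℂ} (hf : IsHarmonicBloch ν h g) :
    IsHarmonicBlochType ν h g :=
  let ⟨M, hM⟩ := hf
  ⟨M, fun z hz => (blochType_le_bloch ν h g hz).trans (hM z hz)⟩

lemma isHarmonicBlochType_of_deriv_eq_mul {ν a K : ℝ} {h g : ℂ → ℂ} (ha : 0 ≤ a)
    (haν : a ≤ ν + 1 / 2) (hK : 0 ≤ K) (hg : ∀ z ∈ ball (0 : ℂ) 1, deriv g z = z * deriv h z)
    (hh : ∀ z ∈ ball (0 : ℂ) 1, ‖deriv h z‖ ≤ K * ‖1 - z‖ ^ (-a)) :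
    IsHarmonicBlochType ν h g := by
  refine ⟨K * 2 ^ a, fun z hz => ?_⟩
  have hs : 0 < 1 - ‖z‖ ^ 2 := one_sub_norm_sq_pos hz
  have hs1 : 1 - ‖z‖ ^ 2 ≤ 1 := by nlinarith [norm_nonneg z]
  rw [hg z hz, norm_mul, Real.sqrt_abs_sq_sub_mul_sq (norm_nonneg _) (by linarith)]
  set s := 1 - ‖z‖ ^ 2
  have hh' : ‖deriv h z‖ ≤ K * 2 ^ a * s ^ (-a) := by
    calc ‖deriv h z‖ ≤ K * ‖1 - z‖ ^ (-a) := hh z hz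
      _ ≤ K * (s / 2) ^ (-a) := by
          refine mul_le_mul_of_nonneg_left ?_ hK
          exact Real.rpow_le_rpow_of_nonpos (by positivity)
            (one_sub_norm_sq_div_two_le_norm_one_sub hz) (by linarith)
      _ = K * 2 ^ a * s ^ (-a) := by
          rw [Real.div_rpow hs.le zero_le_two, Real.rpow_neg zero_le_two]
          field_simp
  calc s ^ ν * (‖deriv h z‖ * √s) ≤ s ^ ν * (K * 2 ^ a * s ^ (-a) * √s) := by gcongr
    _ = K * 2 ^ a * s ^ (ν + -a + 1 / 2) := by
        rw [Real.sqrt_eq_rpow, Real.rpow_add hs, Real.rpow_add hs]; ring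
    _ ≤ K * 2 ^ a := by
        refine mul_le_of_le_one_right (by positivity) (Real.rpow_le_one hs.le hs1 ?_)
        linarith

lemma not_isHarmonicBloch_of_le_norm_deriv {ν a K : ℝ} {h g : ℂ → ℂ} (hν : 0 ≤ ν) (hνa : ν < a)
    (hK : 0 < K) (hh : ∀ ε ∈ Ioo (0 : ℝ) 1, K * ε ^ (-a) ≤ ‖deriv h ((1 - ε : ℝ) : ℂ)‖) :
    ¬ IsHarmonicBloch ν h g := by
  rintro ⟨M, hM⟩
  have hlow : ∀ ε ∈ Ioo (0 : ℝ) 1, K * ε ^ (ν - a) ≤ M := fun ε hε => by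
    obtain ⟨h0, h1⟩ := hε
    have hweight : ε ^ ν ≤ (1 - ‖((1 - ε : ℝ) : ℂ)‖ ^ 2) ^ ν := by
      rw [norm_real, Real.norm_of_nonneg (by linarith)]
      exact Real.rpow_le_rpow h0.le (by nlinarith) hν
    calc K * ε ^ (ν - a) = ε ^ ν * (K * ε ^ (-a)) := by
          rw [sub_eq_add_neg, Real.rpow_add h0]; ring
      _ ≤ _ := mul_le_mul hweight ((hh ε ⟨h0, h1⟩).trans (le_add_of_nonneg_right (norm_nonneg _)))
          (by positivity) ((Real.rpow_nonneg h0.le ν).trans hweight)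
      _ ≤ M := hM _ (ofReal_one_sub_mem_ball ⟨h0, h1⟩)
  have htend : Tendsto (fun ε : ℝ => K * ε ^ (ν - a)) (𝓝[>] 0) atTop :=
    (tendsto_rpow_neg_nhdsGT_zero (by linarith)).const_mul_atTop hK
  obtain ⟨ε, hεM, hε⟩ := ((htend.eventually_gt_atTop M).and (Ioo_mem_nhdsGT one_pos)).exists
  exact (hlow ε hε).not_gt hεM

lemma hasDerivAt_one_sub_cpow (c : ℂ) {z : ℂ} (hz : 1 - z ∈ slitPlane) :
    HasDerivAt (fun w => (1 - w) ^ c) (-(c * (1 - z) ^ (c - 1))) z := by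
  simpa using ((hasDerivAt_id z).const_sub 1).cpow_const hz (c := c)

/-- `w (1 - w)^c + ((1 - w)^(c + 1) - 1)/(c + 1)` is the primitive of `w ↦ w · d/dw (1 - w)^c`
vanishing at `0`. -/
lemma hasDerivAt_mul_one_sub_cpow_add {c z : ℂ} (hc : c + 1 ≠ 0) (hz : 1 - z ∈ slitPlane) :
    HasDerivAt (fun w => w * (1 - w) ^ c + ((1 - w) ^ (c + 1) - 1) / (c + 1))
      (z * -(c * (1 - z) ^ (c - 1))) z := by
  refine (((hasDerivAt_id z).mul (hasDerivAt_one_sub_cpow c hz)).add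
    (((hasDerivAt_one_sub_cpow (c + 1) hz).sub_const 1).div_const (c + 1))).congr_deriv ?_
  have hpow : (1 - z) ^ c = (1 - z) ^ (c - 1) * (1 - z) := by
    conv_lhs => rw [← sub_add_cancel c 1, cpow_add _ _ (slitPlane_ne_zero hz), cpow_one]
  rw [add_sub_cancel_right, hpow, id]
  field_simp
  ring

lemma exists_sensePreserving_isHarmonicBlochType_not_isHarmonicBloch {ν a : ℝ} (hν : 0 < ν)
    (hνa : ν < a) (haν : a ≤ ν + 1 / 2) (ha1 : a ≠ 1) (ha2 : a ≠ 2) :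
    ∃ h g : ℂ → ℂ,
      DifferentiableOn ℂ h (ball 0 1) ∧ DifferentiableOn ℂ g (ball 0 1) ∧ g 0 = 0 ∧
      (∀ z ∈ ball (0 : ℂ) 1, ‖deriv g z‖ < ‖deriv h z‖) ∧
      IsHarmonicBlochType ν h g ∧ ¬ IsHarmonicBloch ν h g := by
  set c : ℂ := ((1 - a : ℝ) : ℂ)
  have hc : c + 1 ≠ 0 := by
    simp only [c, ← ofReal_one, ← ofReal_add, ne_eq, ofReal_eq_zero]
    exact fun h => ha2 (by linarith)
  have hh := fun z (hz : z ∈ ball (0 : ℂ) 1) => hasDerivAt_one_sub_cpow c (one_sub_mem_slitPlane hz)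
  have hg := fun z (hz : z ∈ ball (0 : ℂ) 1) =>
    hasDerivAt_mul_one_sub_cpow_add hc (one_sub_mem_slitPlane hz)
  have hnorm : ∀ z : ℂ, ‖-(c * (1 - z) ^ (c - 1))‖ = |1 - a| * ‖1 - z‖ ^ (-a) := fun z => by
    rw [norm_neg, norm_mul, show c - 1 = ((-a : ℝ) : ℂ) by simp [c], norm_cpow_real, norm_real,
      Real.norm_eq_abs]
  have hK : 0 < |1 - a| := abs_pos.mpr (sub_ne_zero.mpr ha1.symm)
  have hpos : ∀ z ∈ ball (0 : ℂ) 1, 0 < ‖deriv _ z‖ := fun z hz => by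
    rw [(hh z hz).deriv, hnorm]
    exact mul_pos hK
      (Real.rpow_pos_of_pos (norm_pos_iff.mpr (slitPlane_ne_zero (one_sub_mem_slitPlane hz))) _)
  refine ⟨_, _, fun z hz => (hh z hz).differentiableAt.differentiableWithinAt,
    fun z hz => (hg z hz).differentiableAt.differentiableWithinAt, by simp, fun z hz => ?_,
    isHarmonicBlochType_of_deriv_eq_mul (hν.trans hνa).le haν (abs_nonneg _)
      (fun z hz => by rw [(hg z hz).deriv, (hh z hz).deriv])
      (fun z hz => by rw [(hh z hz).deriv, hnorm]),
    not_isHarmonicBloch_of_le_norm_deriv hν.le hνa hK fun ε hε => ?_⟩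
  · rw [(hg z hz).deriv, ← (hh z hz).deriv, norm_mul]
    exact mul_lt_of_lt_one_left (hpos z hz) (mem_ball_zero_iff.mp hz)
  · rw [(hh _ (ofReal_one_sub_mem_ball hε)).deriv, hnorm,
      show 1 - ((1 - ε : ℝ) : ℂ) = (ε : ℂ) by push_cast; ring, norm_real,
      Real.norm_of_nonneg hε.1.le]

/-- The exponents `1` and `2` are excluded because `h` or `g` would then need a logarithm. -/
lemma exists_mem_Ioc_ne_one_ne_two (ν : ℝ) : ∃ a ∈ Ioc ν (ν + 1 / 2), a ≠ 1 ∧ a ≠ 2 := by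
  by_cases hbad : ν + 1 / 2 = 1 ∨ ν + 1 / 2 = 2
  · exact ⟨ν + 1 / 4, ⟨by linarith, by linarith⟩,
      by rcases hbad with h | h <;> constructor <;> intro <;> linarith⟩
  · obtain ⟨h1, h2⟩ := not_or.mp hbad
    exact ⟨ν + 1 / 2, ⟨by linarith, le_rfl⟩, h1, h2⟩

/-- For every ν > 0:
(i) every harmonic mapping `f = h + conj g` on `𝔻` satisfies `β*_ν(f) ≤ β_ν(f)` pointwise,
so every harmonic ν-Bloch mapping is a harmonic ν-Bloch-type mapping; and
(ii) there is a sense-preserving harmonic mapping `f = h + conj g` with `β*_ν(f) < ∞`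
but `β_ν(f) = ∞`. Hence the inclusion `𝓑_H(ν) ⊆ 𝓑*_H(ν)` is strict. -/
theorem nu_Bloch_subset_nu_Bloch_type_strict (ν : ℝ) (hν : 0 < ν) :
    (∀ h g : ℂ → ℂ, DifferentiableOn ℂ h (ball 0 1) → DifferentiableOn ℂ g (ball 0 1) →
      g 0 = 0 →
      (∀ z ∈ ball (0 : ℂ) 1,
        (1 - ‖z‖ ^ 2) ^ ν *
          Real.sqrt |‖deriv h z‖ ^ 2 - ‖deriv g z‖ ^ 2|
        ≤ (1 - ‖z‖ ^ 2) ^ ν *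
            (‖deriv h z‖ + ‖deriv g z‖)) ∧
      ((∃ M : ℝ, ∀ z ∈ ball (0 : ℂ) 1,
          (1 - ‖z‖ ^ 2) ^ ν *
            (‖deriv h z‖ + ‖deriv g z‖) ≤ M) →
        (∃ M : ℝ, ∀ z ∈ ball (0 : ℂ) 1,
          (1 - ‖z‖ ^ 2) ^ ν *
            Real.sqrt |‖deriv h z‖ ^ 2 - ‖deriv g z‖ ^ 2| ≤ M))) ∧
    (∃ h g : ℂ → ℂ,
      DifferentiableOn ℂ h (ball 0 1) ∧ DifferentiableOn ℂ g (ball 0 1) ∧ g 0 = 0 ∧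
      (∀ z ∈ ball (0 : ℂ) 1, ‖deriv g z‖ < ‖deriv h z‖) ∧
      (∃ M : ℝ, ∀ z ∈ ball (0 : ℂ) 1,
        (1 - ‖z‖ ^ 2) ^ ν *
          Real.sqrt |‖deriv h z‖ ^ 2 - ‖deriv g z‖ ^ 2| ≤ M) ∧
      ¬ (∃ M : ℝ, ∀ z ∈ ball (0 : ℂ) 1,
        (1 - ‖z‖ ^ 2) ^ ν *
          (‖deriv h z‖ + ‖deriv g z‖) ≤ M)) := by
  refine ⟨fun h g _ _ _ => ⟨fun z hz => blochType_le_bloch ν h g hz,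
    IsHarmonicBloch.isHarmonicBlochType⟩, ?_⟩
  obtain ⟨a, ⟨hνa, haν⟩, ha1, ha2⟩ := exists_mem_Ioc_ne_one_ne_two ν
  exact exists_sensePreserving_isHarmonicBlochType_not_isHarmonicBloch hν hνa haν ha1 ha2
end

section
/- Let ν > 0 and let f = h + conj(g) be a harmonic mapping on 𝔻. Then β_ν(f) < ∞ if and only if both β*_ν(f) < ∞ and at least one of sup_{z∈𝔻}(1−|z|²)^ν|h'(z)| < ∞ or sup_{z∈𝔻}(1−|z|²)^ν|g'(z)| < ∞ holds. Equivalently, the harmonic ν-Bloch-type mappings that are not harmonic ν-Bloch mappings are exactly those f = h + conj(g) with β*_ν(f) < ∞ for which neither h nor g belongs to the analytic ν-Bloch space. -/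
open Complex Metric

/-! Everything happens pointwise: with `a = |h'|` and `b = |g'|` one has
`√|a² - b²| ≤ a + b ≤ 2a + √|a² - b²|`, and symmetrically in `a` and `b`. -/

namespace Real

lemma sqrt_abs_sq_sub_sq_le_add_s6 {a b : ℝ} (ha : 0 ≤ a) (hb : 0 ≤ b) :
    √|a ^ 2 - b ^ 2| ≤ a + b := by
  have habs : |a ^ 2 - b ^ 2| ≤ (a + b) ^ 2 := by
    rw [abs_le]; constructor <;> nlinarith
  calc √|a ^ 2 - b ^ 2| ≤ √((a + b) ^ 2) := sqrt_le_sqrt habs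
    _ = a + b := sqrt_sq (add_nonneg ha hb)

lemma le_add_sqrt_abs_sq_sub_sq {a b : ℝ} (ha : 0 ≤ a) :
    b ≤ a + √|a ^ 2 - b ^ 2| := by
  have hs : 0 ≤ √|a ^ 2 - b ^ 2| := sqrt_nonneg _
  have hsq : √|a ^ 2 - b ^ 2| ^ 2 = |a ^ 2 - b ^ 2| := sq_sqrt (abs_nonneg _)
  have hb2 : b ^ 2 ≤ a ^ 2 + |a ^ 2 - b ^ 2| := by
    linarith [neg_abs_le (a ^ 2 - b ^ 2)]
  nlinarith [mul_nonneg ha hs]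

end Real

section WeightedBounds

variable {α : Type*} {s : Set α} {w a b : α → ℝ}

lemma exists_bound_mul_add_of_exists_bound_mul_sqrt
    (hw : ∀ x ∈ s, 0 ≤ w x) (ha : ∀ x, 0 ≤ a x)
    (hJ : ∃ M, ∀ x ∈ s, w x * √|a x ^ 2 - b x ^ 2| ≤ M)
    (hA : ∃ M, ∀ x ∈ s, w x * a x ≤ M) :
    ∃ M, ∀ x ∈ s, w x * (a x + b x) ≤ M := by
  obtain ⟨MJ, hMJ⟩ := hJ
  obtain ⟨MA, hMA⟩ := hA
  refine ⟨2 * MA + MJ, fun x hx => ?_⟩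
  have hab : a x + b x ≤ 2 * a x + √|a x ^ 2 - b x ^ 2| := by
    linarith [Real.le_add_sqrt_abs_sq_sub_sq (ha x) (b := b x)]
  calc w x * (a x + b x) ≤ w x * (2 * a x + √|a x ^ 2 - b x ^ 2|) :=
        mul_le_mul_of_nonneg_left hab (hw x hx)
    _ = 2 * (w x * a x) + w x * √|a x ^ 2 - b x ^ 2| := by ring
    _ ≤ 2 * MA + MJ := by linarith [hMA x hx, hMJ x hx]

lemma exists_bound_mul_add_iff (hw : ∀ x ∈ s, 0 ≤ w x) (ha : ∀ x, 0 ≤ a x)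
    (hb : ∀ x, 0 ≤ b x) :
    (∃ M, ∀ x ∈ s, w x * (a x + b x) ≤ M) ↔
      (∃ M, ∀ x ∈ s, w x * √|a x ^ 2 - b x ^ 2| ≤ M) ∧
        ((∃ M, ∀ x ∈ s, w x * a x ≤ M) ∨ (∃ M, ∀ x ∈ s, w x * b x ≤ M)) := by
  constructor
  · rintro ⟨M, hM⟩
    refine ⟨⟨M, fun x hx => ?_⟩, Or.inl ⟨M, fun x hx => ?_⟩⟩
    · exact (mul_le_mul_of_nonneg_left
        (Real.sqrt_abs_sq_sub_sq_le_add_s6 (ha x) (hb x)) (hw x hx)).trans (hM x hx)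
    · exact (mul_le_mul_of_nonneg_left (le_add_of_nonneg_right (hb x))
        (hw x hx)).trans (hM x hx)
  · rintro ⟨hJ, hA | hB⟩
    · exact exists_bound_mul_add_of_exists_bound_mul_sqrt hw ha hJ hA
    · simp_rw [abs_sub_comm (a _ ^ 2), add_comm (a _)] at hJ ⊢
      exact exists_bound_mul_add_of_exists_bound_mul_sqrt hw hb hJ hB

end WeightedBounds

theorem harmonic_nu_Bloch_iff_Bloch_type_and_component_general
    (ν : ℝ) (h g : ℂ → ℂ) :
    (∃ M : ℝ, ∀ z ∈ ball (0 : ℂ) 1,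
      (1 - ‖z‖ ^ 2) ^ ν *
        (‖deriv h z‖ + ‖deriv g z‖) ≤ M) ↔
    ((∃ M : ℝ, ∀ z ∈ ball (0 : ℂ) 1,
        (1 - ‖z‖ ^ 2) ^ ν *
          Real.sqrt |‖deriv h z‖ ^ 2 - ‖deriv g z‖ ^ 2| ≤ M) ∧
      ((∃ M : ℝ, ∀ z ∈ ball (0 : ℂ) 1,
          (1 - ‖z‖ ^ 2) ^ ν * ‖deriv h z‖ ≤ M) ∨
        (∃ M : ℝ, ∀ z ∈ ball (0 : ℂ) 1,
          (1 - ‖z‖ ^ 2) ^ ν * ‖deriv g z‖ ≤ M))) := by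
  have hw : ∀ z ∈ ball (0 : ℂ) 1, 0 ≤ (1 - ‖z‖ ^ 2) ^ ν := fun z hz => by
    have hz1 : ‖z‖ < 1 := mem_ball_zero_iff.mp hz
    exact Real.rpow_nonneg (by nlinarith [norm_nonneg z]) ν
  exact exists_bound_mul_add_iff hw (fun z => norm_nonneg (deriv h z))
    (fun z => norm_nonneg (deriv g z))

/-- For a harmonic mapping `f = h + conj g` on `𝔻` and ν > 0:
`β_ν(f) < ∞` if and only if `β*_ν(f) < ∞` and at least one of `h`, `g` belongs to
the analytic ν-Bloch space. -/
theorem harmonic_nu_Bloch_iff_Bloch_type_and_component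
    (ν : ℝ) (hν : 0 < ν) (h g : ℂ → ℂ)
    (hh : DifferentiableOn ℂ h (ball 0 1))
    (hg : DifferentiableOn ℂ g (ball 0 1))
    (hg0 : g 0 = 0) :
    (∃ M : ℝ, ∀ z ∈ ball (0 : ℂ) 1,
      (1 - ‖z‖ ^ 2) ^ ν *
        (‖deriv h z‖ + ‖deriv g z‖) ≤ M) ↔
    ((∃ M : ℝ, ∀ z ∈ ball (0 : ℂ) 1,
        (1 - ‖z‖ ^ 2) ^ ν *
          Real.sqrt |‖deriv h z‖ ^ 2 - ‖deriv g z‖ ^ 2| ≤ M) ∧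
      ((∃ M : ℝ, ∀ z ∈ ball (0 : ℂ) 1,
          (1 - ‖z‖ ^ 2) ^ ν * ‖deriv h z‖ ≤ M) ∨
        (∃ M : ℝ, ∀ z ∈ ball (0 : ℂ) 1,
          (1 - ‖z‖ ^ 2) ^ ν * ‖deriv g z‖ ≤ M))) :=
  harmonic_nu_Bloch_iff_Bloch_type_and_component_general ν h g
end

section
/- Let ν > 0 and let f = h + conj(g) be a sense-preserving harmonic mapping on 𝔻 with β*_ν(f) < ∞ and dilatation ω_f = g'/h'. Then for every z ∈ 𝔻, |g'(z)| < |h'(z)| ≤ (β*_ν(f)/(1−|z|²)^{ν+1/2}) · √((1 + |ω_f(0)|)/(1 − |ω_f(0)|)). -/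
/-!
The dilatation `ω = g'/h'` is a holomorphic self-map of the disc, so the Schwarz lemma applied
to `ω` followed by the disc automorphism sending `ω(0)` to `0` gives the Schwarz–Pick bound
`1 - |z|² ≤ (1 - |ω(z)|²) (1 + |ω(0)|) / (1 - |ω(0)|)`. Since `J_f = |h'|² (1 - |ω|²)`, the
hypothesis `(1 - |z|²)^ν √J_f ≤ M` then bounds `|h'(z)|`.
-/

open Complex ComplexConjugate Metric Set

namespace Complex

theorem sq_norm_one_sub_conj_mul_sub_sq_norm_sub (c u : ℂ) :
    ‖1 - conj c * u‖ ^ 2 - ‖u - c‖ ^ 2 = (1 - ‖c‖ ^ 2) * (1 - ‖u‖ ^ 2) := by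
  simp only [Complex.sq_norm, normSq_apply, sub_re, sub_im, mul_re, mul_im, conj_re, conj_im, one_re,
    one_im]
  ring

theorem one_sub_norm_le_norm_one_sub_conj_mul {c u : ℂ} (hu : ‖u‖ ≤ 1) :
    1 - ‖c‖ ≤ ‖1 - conj c * u‖ :=
  calc 1 - ‖c‖ ≤ 1 - ‖conj c * u‖ := by
        rw [norm_mul, norm_conj]
        nlinarith [norm_nonneg c]
    _ = ‖(1 : ℂ)‖ - ‖conj c * u‖ := by rw [norm_one]
    _ ≤ ‖1 - conj c * u‖ := norm_sub_norm_le _ _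

theorem one_sub_conj_mul_ne_zero {c u : ℂ} (hc : ‖c‖ < 1) (hu : ‖u‖ ≤ 1) :
    1 - conj c * u ≠ 0 :=
  norm_pos_iff.1 <| (sub_pos.2 hc).trans_le (one_sub_norm_le_norm_one_sub_conj_mul hu)

theorem norm_div_one_sub_conj_mul_lt_one {c u : ℂ} (hc : ‖c‖ < 1) (hu : ‖u‖ < 1) :
    ‖(u - c) / (1 - conj c * u)‖ < 1 := by
  have hden := norm_pos_iff.2 (one_sub_conj_mul_ne_zero hc hu.le)
  rw [norm_div, div_lt_one hden, ← sq_lt_sq₀ (norm_nonneg _) hden.le, ← sub_pos,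
    sq_norm_one_sub_conj_mul_sub_sq_norm_sub]
  have hc2 : ‖c‖ ^ 2 < 1 := by nlinarith [norm_nonneg c]
  have hu2 : ‖u‖ ^ 2 < 1 := by nlinarith [norm_nonneg u]
  exact mul_pos (sub_pos.2 hc2) (sub_pos.2 hu2)

section SchwarzPick

variable {ω : ℂ → ℂ} {z : ℂ}

theorem norm_sub_le_mul_norm_one_sub_conj_mul_of_mapsTo_ball
    (hd : DifferentiableOn ℂ ω (ball 0 1)) (hmaps : MapsTo ω (ball 0 1) (ball 0 1))
    (hz : z ∈ ball 0 1) :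
    ‖ω z - ω 0‖ ≤ ‖z‖ * ‖1 - conj (ω 0) * ω z‖ := by
  have hω : ∀ w ∈ ball (0 : ℂ) 1, ‖ω w‖ < 1 := fun w hw => mem_ball_zero_iff.1 (hmaps hw)
  have hc := hω 0 (mem_ball_self one_pos)
  set φ : ℂ → ℂ := fun w => (ω w - ω 0) / (1 - conj (ω 0) * ω w)
  have hφd : DifferentiableOn ℂ φ (ball 0 1) :=
    (hd.sub_const _).div ((hd.const_mul _).const_sub 1)
      fun w hw => one_sub_conj_mul_ne_zero hc (hω w hw).le
  have hφmaps : MapsTo φ (ball 0 1) (closedBall 0 1) := fun w hw =>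
    mem_closedBall_zero_iff.2 (norm_div_one_sub_conj_mul_lt_one hc (hω w hw)).le
  have hφz : ‖φ z‖ ≤ ‖z‖ :=
    norm_le_norm_of_mapsTo_ball hφd hφmaps (by simp [φ]) (mem_ball_zero_iff.1 hz)
  rwa [norm_div, div_le_iff₀ (norm_pos_iff.2 (one_sub_conj_mul_ne_zero hc (hω z hz).le))] at hφz

theorem one_sub_sq_norm_le_of_mapsTo_ball
    (hd : DifferentiableOn ℂ ω (ball 0 1)) (hmaps : MapsTo ω (ball 0 1) (ball 0 1))
    (hz : z ∈ ball 0 1) :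
    1 - ‖z‖ ^ 2 ≤ (1 - ‖ω z‖ ^ 2) * ((1 + ‖ω 0‖) / (1 - ‖ω 0‖)) := by
  have hc : ‖ω 0‖ < 1 := mem_ball_zero_iff.1 (hmaps (mem_ball_self one_pos))
  have hu : ‖ω z‖ < 1 := mem_ball_zero_iff.1 (hmaps hz)
  have hschwarz := norm_sub_le_mul_norm_one_sub_conj_mul_of_mapsTo_ball hd hmaps hz
  have hident := sq_norm_one_sub_conj_mul_sub_sq_norm_sub (ω 0) (ω z)
  have hlower := one_sub_norm_le_norm_one_sub_conj_mul (c := ω 0) hu.le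
  set a := ‖ω 0‖
  set D := ‖1 - conj (ω 0) * ω z‖
  have ha : 0 < 1 - a := sub_pos.2 hc
  -- `(1 - |z|²) D² ≤ D² - |ω z - ω 0|² = (1 - a²)(1 - |ω z|²)`, and `D ≥ 1 - a`.
  have hsq : (1 - ‖z‖ ^ 2) * (1 - a) ^ 2 ≤ (1 - a ^ 2) * (1 - ‖ω z‖ ^ 2) := by
    have hS := mul_self_le_mul_self (norm_nonneg _) hschwarz
    have hD := mul_self_le_mul_self ha.le hlower
    have hr : ‖z‖ ^ 2 < 1 := by nlinarith [norm_nonneg z, mem_ball_zero_iff.1 hz]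
    nlinarith [mul_le_mul_of_nonneg_left hD (sub_pos.2 hr).le]
  rw [mul_div_assoc', le_div_iff₀ ha]
  nlinarith

end SchwarzPick

theorem sqrt_abs_sq_norm_sub_sq_norm {a b : ℂ} (hba : ‖b‖ ≤ ‖a‖) :
    √|‖a‖ ^ 2 - ‖b‖ ^ 2| = ‖a‖ * √(1 - ‖b / a‖ ^ 2) := by
  rcases eq_or_ne a 0 with rfl | ha
  · simp_all
  have hsplit : ‖a‖ ^ 2 - ‖b‖ ^ 2 = ‖a‖ ^ 2 * (1 - ‖b / a‖ ^ 2) := by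
    rw [norm_div]
    field_simp
  have hnonneg : 0 ≤ ‖a‖ ^ 2 - ‖b‖ ^ 2 :=
    sub_nonneg.2 (pow_le_pow_left₀ (norm_nonneg b) hba 2)
  rw [abs_of_nonneg hnonneg, hsplit, Real.sqrt_mul (sq_nonneg _), Real.sqrt_sq (norm_nonneg a)]

end Complex

theorem le_div_rpow_add_half_mul_sqrt {A M s t k ν : ℝ} (ht : 0 < t) (hA : 0 ≤ A)
    (hk : 0 ≤ k) (hts : t ≤ s * k) (hM : t ^ ν * (A * √s) ≤ M) :
    A ≤ M / t ^ (ν + 1 / 2) * √k := by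
  have htν : 0 < t ^ ν := Real.rpow_pos_of_pos ht ν
  have hsqrt : √t ≤ √s * √k := by
    rw [← Real.sqrt_mul' s hk]
    exact Real.sqrt_le_sqrt hts
  rw [Real.rpow_add ht, ← Real.sqrt_eq_rpow, div_mul_eq_mul_div,
    le_div_iff₀ (mul_pos htν (Real.sqrt_pos.2 ht))]
  calc A * (t ^ ν * √t) ≤ A * (t ^ ν * (√s * √k)) := by gcongr
    _ = t ^ ν * (A * √s) * √k := by ring
    _ ≤ M * √k := by gcongr

theorem derivative_bound_sense_preserving_Bloch_type_general
    (ν : ℝ) (h g : ℂ → ℂ)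
    (hh : DifferentiableOn ℂ h (ball 0 1))
    (hg : DifferentiableOn ℂ g (ball 0 1))
    (hsp : ∀ z ∈ ball (0 : ℂ) 1, ‖deriv g z‖ < ‖deriv h z‖)
    (M : ℝ)
    (hM : ∀ z ∈ ball (0 : ℂ) 1,
      (1 - ‖z‖ ^ 2) ^ ν *
        Real.sqrt |‖deriv h z‖ ^ 2 - ‖deriv g z‖ ^ 2| ≤ M) :
    ∀ z ∈ ball (0 : ℂ) 1,
      ‖deriv g z‖ < ‖deriv h z‖ ∧
      ‖deriv h z‖
        ≤ M / (1 - ‖z‖ ^ 2) ^ (ν + 1 / 2) *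
          Real.sqrt ((1 + ‖deriv g 0 / deriv h 0‖)
            / (1 - ‖deriv g 0 / deriv h 0‖)) := by
  intro z hz
  refine ⟨hsp z hz, ?_⟩
  have hh'_pos : ∀ w ∈ ball (0 : ℂ) 1, 0 < ‖deriv h w‖ := fun w hw =>
    (norm_nonneg _).trans_lt (hsp w hw)
  set ω : ℂ → ℂ := fun w => deriv g w / deriv h w
  have hωd : DifferentiableOn ℂ ω (ball 0 1) :=
    (hg.analyticOnNhd isOpen_ball).deriv.differentiableOn.div
      (hh.analyticOnNhd isOpen_ball).deriv.differentiableOn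
      fun w hw => norm_pos_iff.1 (hh'_pos w hw)
  have hωmaps : MapsTo ω (ball 0 1) (ball 0 1) := fun w hw => by
    simpa [ω, norm_div, div_lt_one (hh'_pos w hw)] using hsp w hw
  have hpick := one_sub_sq_norm_le_of_mapsTo_ball hωd hωmaps hz
  have hω0 : ‖ω 0‖ < 1 := mem_ball_zero_iff.1 (hωmaps (mem_ball_self one_pos))
  have hM' := hM z hz
  rw [sqrt_abs_sq_norm_sub_sq_norm (hsp z hz).le] at hM'
  have hr : ‖z‖ ^ 2 < 1 := by nlinarith [norm_nonneg z, mem_ball_zero_iff.1 hz]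
  exact le_div_rpow_add_half_mul_sqrt (sub_pos.2 hr) (norm_nonneg _)
    (div_nonneg (by positivity) (sub_pos.2 hω0).le) hpick hM'

/-- If `f = h + conj g` is a sense-preserving harmonic mapping on `𝔻` with
`β*_ν(f) ≤ M` and dilatation `ω_f = g'/h'`, then for every `z ∈ 𝔻`,
`|g'(z)| < |h'(z)| ≤ (M/(1−|z|²)^{ν+1/2}) √((1+|ω_f(0)|)/(1−|ω_f(0)|))`. -/
theorem derivative_bound_sense_preserving_Bloch_type
    (ν : ℝ) (hν : 0 < ν) (h g : ℂ → ℂ)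
    (hh : DifferentiableOn ℂ h (ball 0 1))
    (hg : DifferentiableOn ℂ g (ball 0 1))
    (hg0 : g 0 = 0)
    (hsp : ∀ z ∈ ball (0 : ℂ) 1, ‖deriv g z‖ < ‖deriv h z‖)
    (M : ℝ)
    (hM : ∀ z ∈ ball (0 : ℂ) 1,
      (1 - ‖z‖ ^ 2) ^ ν *
        Real.sqrt |‖deriv h z‖ ^ 2 - ‖deriv g z‖ ^ 2| ≤ M) :
    ∀ z ∈ ball (0 : ℂ) 1,
      ‖deriv g z‖ < ‖deriv h z‖ ∧
      ‖deriv h z‖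
        ≤ M / (1 - ‖z‖ ^ 2) ^ (ν + 1 / 2) *
          Real.sqrt ((1 + ‖deriv g 0 / deriv h 0‖)
            / (1 - ‖deriv g 0 / deriv h 0‖)) :=
  derivative_bound_sense_preserving_Bloch_type_general ν h g hh hg hsp M hM
end

section
/- Let ν > 0 and let f = h + conj(g) be a locally univalent harmonic mapping on 𝔻 (J_f(z) ≠ 0 for all z ∈ 𝔻) whose pre-Schwarzian norm satisfies ||P_f|| = sup_{z∈𝔻}(1−|z|²)|P_f(z)| ≤ ν. Then β*_{ν/2}(f) < ∞; that is, f is a harmonic (ν/2)-Bloch-type mapping. -/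
/-!
The real gradient of `log J_f` at `z` is `v ↦ 2 Re (P_f(z) v)`, so `‖P_f‖ ≤ ν` bounds it by
`2ν / (1 - |z|²)`. Comparing `log J_f` along the segment `[0, z]` with
`ν (log (1 + t) - log (1 - t))`, whose derivative is `2ν / (1 - t²)`, gives
`log |J_f(z)| ≤ log |J_f(0)| + ν log ((1 + |z|) / (1 - |z|))`, and exponentiating,
`(1 - |z|²)^(ν/2) √|J_f(z)| ≤ (1 + |z|)^ν √|J_f(0)| ≤ 2^ν √|J_f(0)|`.
Since `Real.log x = Real.log |x|`, the sign of `J_f` never has to be fixed.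
-/

open Complex Metric ComplexConjugate

theorem hasDerivAt_log_one_add_sub_log_one_sub {t : ℝ} (ht : |t| < 1) :
    HasDerivAt (fun s => Real.log (1 + s) - Real.log (1 - s)) (2 / (1 - t ^ 2)) t := by
  obtain ⟨ht₁, ht₂⟩ := abs_lt.mp ht
  have hp : 1 + t ≠ 0 := by linarith
  have hm : 1 - t ≠ 0 := by linarith
  have hd : HasDerivAt (fun s => Real.log (1 + s) - Real.log (1 - s))
      (1 / (1 + t) - -1 / (1 - t)) t :=
    (((hasDerivAt_id' t).const_add 1).log hp).sub (((hasDerivAt_id' t).const_sub 1).log hm)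
  convert hd using 1
  rw [show 1 - t ^ 2 = (1 + t) * (1 - t) by ring]
  field_simp
  ring

theorem le_add_log_of_norm_fderiv_le {E : Type*} [NormedAddCommGroup E] [NormedSpace ℝ E]
    {u : E → ℝ} {u' : E → StrongDual ℝ E} {c : ℝ}
    (hu : ∀ z ∈ ball (0 : E) 1, HasFDerivAt u (u' z) z)
    (hu' : ∀ z ∈ ball (0 : E) 1, ‖u' z‖ ≤ 2 * c / (1 - ‖z‖ ^ 2))
    {z : E} (hz : z ∈ ball 0 1) :
    u z ≤ u 0 + c * (Real.log (1 + ‖z‖) - Real.log (1 - ‖z‖)) := by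
  set r := ‖z‖
  have hseg : ∀ t ∈ Set.Icc (0 : ℝ) 1, ‖t • z‖ = t * r ∧ t • z ∈ ball (0 : E) 1 := by
    rintro t ⟨ht₀, ht₁⟩
    have hnorm : ‖t • z‖ = t * r := by rw [norm_smul, Real.norm_of_nonneg ht₀]
    refine ⟨hnorm, mem_ball_zero_iff.mpr ?_⟩
    rw [hnorm]
    nlinarith [norm_nonneg z, mem_ball_zero_iff.mp hz]
  have hf : ∀ t ∈ Set.Icc (0 : ℝ) 1,
      HasDerivAt (fun s : ℝ => u (s • z)) (u' (t • z) z) t := fun t ht =>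
    (hu _ (hseg t ht).2).comp_hasDerivAt t
      ((hasDerivAt_id t).smul_const z |>.congr_deriv (one_smul ℝ z))
  have hB : ∀ t ∈ Set.Icc (0 : ℝ) 1, HasDerivAt
      (fun s : ℝ => u 0 + c * (Real.log (1 + s * r) - Real.log (1 - s * r)))
      (c * (2 / (1 - (t * r) ^ 2) * r)) t := by
    intro t ht
    have htr : |t * r| < 1 := by
      rw [← (hseg t ht).1, abs_norm]
      exact mem_ball_zero_iff.mp (hseg t ht).2
    exact ((hasDerivAt_log_one_add_sub_log_one_sub htr).comp t
      ((hasDerivAt_id t).mul_const r |>.congr_deriv (one_mul r))).const_mul c |>.const_add _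
  have hf_le_hB : ∀ t ∈ Set.Ico (0 : ℝ) 1, u' (t • z) z ≤ c * (2 / (1 - (t * r) ^ 2) * r) := by
    intro t ht
    have ht' := Set.Ico_subset_Icc_self ht
    calc u' (t • z) z ≤ ‖u' (t • z)‖ * ‖z‖ :=
          (le_abs_self _).trans ((u' (t • z)).le_opNorm z)
      _ ≤ 2 * c / (1 - ‖t • z‖ ^ 2) * r := by
          gcongr
          exact hu' _ (hseg t ht').2
      _ = c * (2 / (1 - (t * r) ^ 2) * r) := by
          rw [(hseg t ht').1]
          ring
  simpa using image_le_of_deriv_right_le_deriv_boundary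
    (fun t ht => (hf t ht).continuousAt.continuousWithinAt)
    (fun t ht => (hf t (Set.Ico_subset_Icc_self ht)).hasDerivWithinAt)
    (by simp) (fun t ht => (hB t ht).continuousAt.continuousWithinAt)
    (fun t ht => (hB t (Set.Ico_subset_Icc_self ht)).hasDerivWithinAt)
    hf_le_hB (Set.right_mem_Icc.mpr zero_le_one)

theorem hasFDerivAt_log_normSq_sub_normSq {F G : ℂ → ℂ} {F' G' z : ℂ}
    (hF : HasDerivAt F F' z) (hG : HasDerivAt G G' z) (hJ : ‖F z‖ ^ 2 - ‖G z‖ ^ 2 ≠ 0) :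
    HasFDerivAt (fun w => Real.log (‖F w‖ ^ 2 - ‖G w‖ ^ 2))
      (reCLM.comp (ContinuousLinearMap.mul ℝ ℂ
        (2 * ((F' * conj (F z) - G' * conj (G z)) / ((‖F z‖ ^ 2 - ‖G z‖ ^ 2 : ℝ) : ℂ))))) z := by
  have hJ' := (hF.hasFDerivAt.restrictScalars ℝ).norm_sq.sub
    (hG.hasFDerivAt.restrictScalars ℝ).norm_sq
  refine (hJ'.log hJ).congr_fderiv ?_
  ext v
  rw [ContinuousLinearMap.comp_apply, ContinuousLinearMap.mul_apply', reCLM_apply,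
    ← mul_div_assoc, div_mul_eq_mul_div, Complex.div_ofReal_re]
  simp only [Pi.sub_apply, smul_apply, sub_apply,
    ContinuousLinearMap.comp_apply, ContinuousLinearMap.coe_restrictScalars',
    ContinuousLinearMap.toSpanSingleton_apply, smul_eq_mul, coe_innerSL_apply, Complex.inner,
    mul_re, conj_re, mul_im, conj_im, mul_neg, sub_neg_eq_add, nsmul_eq_mul, Nat.cast_ofNat,
    re_ofNat, sub_re, im_ofNat, sub_im, zero_mul, sub_zero, add_zero]
  ring

theorem norm_reCLM_comp_mul_le (a : ℂ) :
    ‖reCLM.comp (ContinuousLinearMap.mul ℝ ℂ a)‖ ≤ ‖a‖ :=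
  calc _ ≤ ‖(reCLM : ℂ →L[ℝ] ℝ)‖ * ‖ContinuousLinearMap.mul ℝ ℂ a‖ :=
        ContinuousLinearMap.opNorm_comp_le _ _
    _ ≤ ‖a‖ := by
        rw [reCLM_norm, one_mul]
        exact ContinuousLinearMap.opNorm_mul_apply_le ℝ ℂ a

theorem rpow_mul_sqrt_le_of_log_le {a b r ν : ℝ} (ha : 0 < a) (hb : 0 < b) (hr : r < 1)
    (hr₀ : 0 ≤ r) (hab : Real.log a ≤ Real.log b + ν * (Real.log (1 + r) - Real.log (1 - r))) :
    (1 - r ^ 2) ^ (ν / 2) * √a ≤ (1 + r) ^ ν * √b := by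
  have hp : 0 < 1 + r := by linarith
  have hm : 0 < 1 - r := by linarith
  rw [show 1 - r ^ 2 = (1 + r) * (1 - r) by ring, Real.sqrt_eq_rpow, Real.sqrt_eq_rpow,
    Real.rpow_def_of_pos (mul_pos hp hm), Real.rpow_def_of_pos ha, Real.rpow_def_of_pos hp,
    Real.rpow_def_of_pos hb, ← Real.exp_add, ← Real.exp_add, Real.exp_le_exp,
    Real.log_mul hp.ne' hm.ne']
  linarith

theorem preSchwarzian_bound_gives_Bloch_type_general
    (ν : ℝ) (hν : 0 < ν) (h g : ℂ → ℂ)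
    (hh : DifferentiableOn ℂ h (ball 0 1))
    (hg : DifferentiableOn ℂ g (ball 0 1))
    (hlu : ∀ z ∈ ball (0 : ℂ) 1,
      ‖deriv h z‖ ^ 2 - ‖deriv g z‖ ^ 2 ≠ 0)
    (hP : ∀ z ∈ ball (0 : ℂ) 1,
      (1 - ‖z‖ ^ 2) *
        ‖(deriv (deriv h) z * (starRingEnd ℂ) (deriv h z)
            - deriv (deriv g) z * (starRingEnd ℂ) (deriv g z))
          / ((‖deriv h z‖ ^ 2 - ‖deriv g z‖ ^ 2 : ℝ) : ℂ)‖ ≤ ν) :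
    ∃ M : ℝ, ∀ z ∈ ball (0 : ℂ) 1,
      (1 - ‖z‖ ^ 2) ^ (ν / 2) *
        Real.sqrt |‖deriv h z‖ ^ 2 - ‖deriv g z‖ ^ 2| ≤ M := by
  have hderiv : ∀ F : ℂ → ℂ, DifferentiableOn ℂ F (ball 0 1) →
      ∀ z ∈ ball (0 : ℂ) 1, HasDerivAt (deriv F) (deriv (deriv F) z) z := fun F hF z hz =>
    ((hF.deriv isOpen_ball).differentiableAt (isOpen_ball.mem_nhds hz)).hasDerivAt
  have hlogJ_bound : ∀ z ∈ ball (0 : ℂ) 1, ‖reCLM.comp (ContinuousLinearMap.mul ℝ ℂ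
      (2 * ((deriv (deriv h) z * conj (deriv h z) - deriv (deriv g) z * conj (deriv g z)) /
        ((‖deriv h z‖ ^ 2 - ‖deriv g z‖ ^ 2 : ℝ) : ℂ))))‖ ≤ 2 * ν / (1 - ‖z‖ ^ 2) := by
    intro z hz
    have hz' : 0 < 1 - ‖z‖ ^ 2 := by nlinarith [mem_ball_zero_iff.mp hz, norm_nonneg z]
    refine (norm_reCLM_comp_mul_le _).trans ?_
    rw [norm_mul, Complex.norm_two, mul_div_assoc]
    gcongr
    rw [le_div_iff₀ hz', mul_comm]
    exact hP z hz
  have hJ₀ : 0 < |‖deriv h 0‖ ^ 2 - ‖deriv g 0‖ ^ 2| :=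
    abs_pos.mpr (hlu 0 (mem_ball_self one_pos))
  refine ⟨2 ^ ν * √|‖deriv h 0‖ ^ 2 - ‖deriv g 0‖ ^ 2|, fun z hz => ?_⟩
  have hgrowth := le_add_log_of_norm_fderiv_le (fun w hw => hasFDerivAt_log_normSq_sub_normSq
    (hderiv h hh w hw) (hderiv g hg w hw) (hlu w hw)) hlogJ_bound hz
  calc _ ≤ (1 + ‖z‖) ^ ν * √|‖deriv h 0‖ ^ 2 - ‖deriv g 0‖ ^ 2| :=
        rpow_mul_sqrt_le_of_log_le (abs_pos.mpr (hlu z hz)) hJ₀ (mem_ball_zero_iff.mp hz)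
          (norm_nonneg z) (by simpa only [Real.log_abs] using hgrowth)
    _ ≤ 2 ^ ν * √|‖deriv h 0‖ ^ 2 - ‖deriv g 0‖ ^ 2| := by
        gcongr
        linarith [mem_ball_zero_iff.mp hz]

/-- If `f = h + conj g` is a locally univalent harmonic mapping on `𝔻` whose
pre-Schwarzian norm satisfies `‖P_f‖ ≤ ν`, where
`P_f = (h'' conj h' − g'' conj g')/J_f`, then `β*_{ν/2}(f) < ∞`,
i.e. `f` is a harmonic (ν/2)-Bloch-type mapping. -/
theorem preSchwarzian_bound_gives_Bloch_type
    (ν : ℝ) (hν : 0 < ν) (h g : ℂ → ℂ)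
    (hh : DifferentiableOn ℂ h (ball 0 1))
    (hg : DifferentiableOn ℂ g (ball 0 1))
    (hg0 : g 0 = 0)
    (hlu : ∀ z ∈ ball (0 : ℂ) 1,
      ‖deriv h z‖ ^ 2 - ‖deriv g z‖ ^ 2 ≠ 0)
    (hP : ∀ z ∈ ball (0 : ℂ) 1,
      (1 - ‖z‖ ^ 2) *
        ‖(deriv (deriv h) z * (starRingEnd ℂ) (deriv h z)
            - deriv (deriv g) z * (starRingEnd ℂ) (deriv g z))
          / ((‖deriv h z‖ ^ 2 - ‖deriv g z‖ ^ 2 : ℝ) : ℂ)‖ ≤ ν) :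
    ∃ M : ℝ, ∀ z ∈ ball (0 : ℂ) 1,
      (1 - ‖z‖ ^ 2) ^ (ν / 2) *
        Real.sqrt |‖deriv h z‖ ^ 2 - ‖deriv g z‖ ^ 2| ≤ M :=
  preSchwarzian_bound_gives_Bloch_type_general ν hν h g hh hg hlu hP
end

section
/- Let ν > 0 and let f be a holomorphic function on 𝔻 with f'(z) ≠ 0 for all z ∈ 𝔻 and sup_{z∈𝔻}(1−|z|²)|f''(z)/f'(z)| ≤ ν. Then sup_{z∈𝔻}(1−|z|²)^{ν/2}|f'(z)| < ∞, i.e. f belongs to the analytic (ν/2)-Bloch space. -/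
/-!
Write `g = f'`. Along the radius `t ↦ t z`, the pre-Schwarzian bound says that `log |g|` grows
at rate at most `ν |z| / (1 - t²|z|²)`, the derivative of `ν artanh (t |z|)`. A Grönwall argument
gives `|g z| ≤ |g 0| ((1 + |z|) / (1 - |z|)) ^ (ν / 2)`, and multiplying by `(1 - |z|²) ^ (ν / 2)`
leaves `|g 0| (1 + |z|) ^ ν ≤ |g 0| 2 ^ ν`.
-/

open Complex Metric Set Filter Topology

theorem norm_le_mul_exp_of_norm_deriv_right_le_mul_norm {E : Type*}
    [NormedAddCommGroup E] [NormedSpace ℝ E] {u u' : ℝ → E} {φ φ' : ℝ → ℝ} {a b : ℝ}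
    (hu : ContinuousOn u (Icc a b)) (hu' : ∀ x ∈ Ico a b, HasDerivWithinAt u (u' x) (Ici x) x)
    (hφ : ContinuousOn φ (Icc a b)) (hφ' : ∀ x ∈ Ico a b, HasDerivWithinAt φ (φ' x) (Ici x) x)
    (bound : ∀ x ∈ Ico a b, u x ≠ 0 → ‖u' x‖ ≤ φ' x * ‖u x‖) :
    ∀ ⦃x⦄, x ∈ Icc a b → ‖u x‖ ≤ ‖u a‖ * Real.exp (φ x - φ a) := by
  intro x hx
  set B : ℝ → ℝ → ℝ := fun ε t ↦ (‖u a‖ + ε) * Real.exp (φ t - φ a + ε * (t - a))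
  -- Fence with the strictly larger barriers `B ε`: where `‖u‖` touches `B ε > 0`, `u ≠ 0`.
  have fence : ∀ ε > 0, ‖u x‖ ≤ B ε x := by
    intro ε hε
    refine image_norm_le_of_norm_deriv_right_lt_deriv_boundary' (B' := fun t ↦ (φ' t + ε) * B ε t)
      hu hu' ?_ ?_ ?_ ?_ hx
    · simp only [B, sub_self, mul_zero, add_zero, Real.exp_zero, mul_one]
      linarith
    · exact continuousOn_const.mul
        (((hφ.sub continuousOn_const).add (continuousOn_const.mul
          (continuousOn_id.sub continuousOn_const))).rexp)
    · intro t ht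
      have := ((((hφ' t ht).sub_const (φ a)).add
        (((hasDerivAt_id t).sub_const a).const_mul ε).hasDerivWithinAt).exp).const_mul (‖u a‖ + ε)
      refine this.congr_deriv ?_
      simp only [B, Pi.add_apply, id]
      ring
    · intro t ht heq
      have hBpos : 0 < B ε t := by positivity
      calc ‖u' t‖ ≤ φ' t * ‖u t‖ := bound t ht (norm_pos_iff.mp (heq ▸ hBpos))
        _ < (φ' t + ε) * B ε t := by rw [heq]; nlinarith
  have hlim : Tendsto (fun ε ↦ B ε x) (𝓝[>] 0) (𝓝 (B 0 x)) :=
    ((by fun_prop : Continuous fun ε ↦ B ε x).tendsto 0).mono_left nhdsWithin_le_nhds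
  simpa [B] using ge_of_tendsto hlim (eventually_nhdsWithin_of_forall fence)

theorem Real.hasDerivAt_artanh {x : ℝ} (hx : x ∈ Ioo (-1) 1) :
    HasDerivAt artanh (1 - x ^ 2)⁻¹ x := by
  have h1 : 0 < 1 + x := by linarith [hx.1]
  have h2 : 0 < 1 - x := by linarith [hx.2]
  have heq : (fun y ↦ 1 / 2 * (log (1 + y) - log (1 - y))) =ᶠ[𝓝 x] artanh := by
    filter_upwards [Ioo_mem_nhds hx.1 hx.2] with y hy
    rw [artanh_eq_half_log (Ioo_subset_Icc_self hy),
      log_div (by linarith [hy.1]) (by linarith [hy.2])]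
  refine HasDerivAt.congr_of_eventuallyEq ?_ heq.symm
  have := ((((hasDerivAt_id' x).const_add 1).log h1.ne').sub
    (((hasDerivAt_id' x).const_sub 1).log h2.ne')).const_mul (1 / 2)
  refine this.congr_deriv ?_
  rw [show 1 - x ^ 2 = (1 + x) * (1 - x) by ring]
  field_simp
  ring

theorem Real.one_sub_sq_rpow_mul_exp_mul_artanh {x : ℝ} (hx : x ∈ Ioo (-1) 1) (ν : ℝ) :
    (1 - x ^ 2) ^ (ν / 2) * Real.exp (ν * artanh x) = (1 + x) ^ ν := by
  have h1 : 0 < 1 + x := by linarith [hx.1]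
  have h2 : 0 < 1 - x := by linarith [hx.2]
  rw [artanh_eq_half_log (Ioo_subset_Icc_self hx), log_div h1.ne' h2.ne',
    rpow_def_of_pos (by nlinarith), rpow_def_of_pos h1, ← exp_add,
    show 1 - x ^ 2 = (1 + x) * (1 - x) by ring, log_mul h1.ne' h2.ne']
  ring_nf

theorem norm_le_mul_exp_mul_artanh_of_norm_logDeriv_le {g : ℂ → ℂ} {ν : ℝ}
    (hg : DifferentiableOn ℂ g (ball 0 1))
    (hP : ∀ w ∈ ball (0 : ℂ) 1, (1 - ‖w‖ ^ 2) * ‖logDeriv g w‖ ≤ ν)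
    {z : ℂ} (hz : z ∈ ball (0 : ℂ) 1) :
    ‖g z‖ ≤ ‖g 0‖ * Real.exp (ν * Real.artanh ‖z‖) := by
  set r := ‖z‖
  have hr1 : r < 1 := mem_ball_zero_iff.mp hz
  have hnorm : ∀ t ∈ Icc (0 : ℝ) 1, ‖(t : ℂ) * z‖ = t * r := fun t ht ↦ by
    rw [norm_mul, Complex.norm_real, Real.norm_of_nonneg ht.1]
  have hmem : ∀ t ∈ Icc (0 : ℝ) 1, t * r ∈ Ioo (-1) 1 := fun t ht ↦
    ⟨by nlinarith [norm_nonneg z, ht.1], by nlinarith [norm_nonneg z, ht.2]⟩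
  have hball : ∀ t ∈ Icc (0 : ℝ) 1, (t : ℂ) * z ∈ ball (0 : ℂ) 1 := fun t ht ↦ by
    rw [mem_ball_zero_iff, hnorm t ht]; exact (hmem t ht).2
  have hu : ∀ t ∈ Icc (0 : ℝ) 1,
      HasDerivAt (fun s : ℝ ↦ g (s * z)) (deriv g (t * z) * z) t := fun t ht ↦
    (((hg.differentiableAt (isOpen_ball.mem_nhds (hball t ht))).hasDerivAt).comp (t : ℂ)
      (hasDerivAt_mul_const z)).comp_ofReal
  have hφ : ∀ t ∈ Icc (0 : ℝ) 1, HasDerivAt (fun s ↦ ν * Real.artanh (s * r))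
      (ν * ((1 - (t * r) ^ 2)⁻¹ * r)) t := fun t ht ↦
    (((Real.hasDerivAt_artanh (hmem t ht)).comp t (hasDerivAt_mul_const r)).const_mul ν :)
  have bound : ∀ t ∈ Ico (0 : ℝ) 1, g (t * z) ≠ 0 →
      ‖deriv g (t * z) * z‖ ≤ ν * ((1 - (t * r) ^ 2)⁻¹ * r) * ‖g (t * z)‖ := by
    intro t ht hne
    have ht' := Ico_subset_Icc_self ht
    have hc : 0 < 1 - (t * r) ^ 2 := by nlinarith [(hmem t ht').1, (hmem t ht').2]
    have hL : ‖logDeriv g (t * z)‖ ≤ ν * (1 - (t * r) ^ 2)⁻¹ := by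
      rw [le_mul_inv_iff₀ hc, mul_comm, ← hnorm t ht']
      exact hP _ (hball t ht')
    calc ‖deriv g (t * z) * z‖ = ‖logDeriv g (t * z)‖ * ‖g (t * z)‖ * r := by
          rw [logDeriv_apply, norm_mul, norm_div, div_mul_cancel₀ _ (norm_ne_zero_iff.mpr hne)]
      _ ≤ ν * (1 - (t * r) ^ 2)⁻¹ * ‖g (t * z)‖ * r := by gcongr
      _ = ν * ((1 - (t * r) ^ 2)⁻¹ * r) * ‖g (t * z)‖ := by ring
  have := norm_le_mul_exp_of_norm_deriv_right_le_mul_norm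
    (fun t ht ↦ (hu t ht).continuousAt.continuousWithinAt)
    (fun t ht ↦ (hu t (Ico_subset_Icc_self ht)).hasDerivWithinAt)
    (fun t ht ↦ (hφ t ht).continuousAt.continuousWithinAt)
    (fun t ht ↦ (hφ t (Ico_subset_Icc_self ht)).hasDerivWithinAt) bound
    (right_mem_Icc.mpr zero_le_one)
  simpa using this

theorem analytic_preSchwarzian_bound_gives_Bloch_general
    (ν : ℝ) (f : ℂ → ℂ)
    (hf : DifferentiableOn ℂ f (ball 0 1))
    (hP : ∀ z ∈ ball (0 : ℂ) 1,
      (1 - ‖z‖ ^ 2) * ‖deriv (deriv f) z / deriv f z‖ ≤ ν) :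
    ∃ M : ℝ, ∀ z ∈ ball (0 : ℂ) 1,
      (1 - ‖z‖ ^ 2) ^ (ν / 2) * ‖deriv f z‖ ≤ M := by
  have hν : 0 ≤ ν := (mul_nonneg (by simp) (norm_nonneg _)).trans (hP 0 (mem_ball_self one_pos))
  have hdf : DifferentiableOn ℂ (deriv f) (ball 0 1) :=
    (hf.analyticOnNhd isOpen_ball).deriv.differentiableOn
  refine ⟨‖deriv f 0‖ * 2 ^ ν, fun z hz ↦ ?_⟩
  have hz1 : ‖z‖ < 1 := mem_ball_zero_iff.mp hz
  have hr : ‖z‖ ∈ Ioo (-1) 1 := ⟨by linarith [norm_nonneg z], hz1⟩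
  calc (1 - ‖z‖ ^ 2) ^ (ν / 2) * ‖deriv f z‖
      ≤ (1 - ‖z‖ ^ 2) ^ (ν / 2) * (‖deriv f 0‖ * Real.exp (ν * Real.artanh ‖z‖)) := by
        refine mul_le_mul_of_nonneg_left ?_ (Real.rpow_nonneg (by nlinarith [norm_nonneg z]) _)
        exact norm_le_mul_exp_mul_artanh_of_norm_logDeriv_le hdf hP hz
    _ = ‖deriv f 0‖ * (1 + ‖z‖) ^ ν := by
        rw [← Real.one_sub_sq_rpow_mul_exp_mul_artanh hr]; ring
    _ ≤ ‖deriv f 0‖ * 2 ^ ν := by gcongr; linarith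

/-- If `f` is holomorphic on `𝔻` with `f'` nonvanishing and pre-Schwarzian norm
`sup (1−|z|²)|f''/f'| ≤ ν`, then `f` belongs to the analytic (ν/2)-Bloch space. -/
theorem analytic_preSchwarzian_bound_gives_Bloch
    (ν : ℝ) (hν : 0 < ν) (f : ℂ → ℂ)
    (hf : DifferentiableOn ℂ f (ball 0 1))
    (hf' : ∀ z ∈ ball (0 : ℂ) 1, deriv f z ≠ 0)
    (hP : ∀ z ∈ ball (0 : ℂ) 1,
      (1 - ‖z‖ ^ 2) * ‖deriv (deriv f) z / deriv f z‖ ≤ ν) :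
    ∃ M : ℝ, ∀ z ∈ ball (0 : ℂ) 1,
      (1 - ‖z‖ ^ 2) ^ (ν / 2) * ‖deriv f z‖ ≤ M :=
  analytic_preSchwarzian_bound_gives_Bloch_general ν f hf hP
end
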